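/- arXiv:1904.09184 — 2 statements merged into one kernel-verified Lean document; each statement's English description precedes it below -/
import Mathlib

section
/- Let (s_i)_{i=0}^{m} be the start times of tokens of a timeline with strictly positive durations, and suppose every token carrying a 'main' value v ∉ V_halt is followed by a token with a main value starting exactly 1 time unit later, and the first token (a main value) starts at time 0. Then the start times of main-value tokens are exactly 0, 1, 2, ..., k−1 for some k ≥ 1, i.e., consecutive main-value tokens are at time distance exactly 1. -/
/-- Let `s i` be the start times of the tokens of a timeline (strictly
increasing, by strictly positive durations) and `v i` their values. Suppose the
first token has a main value and starts at time `0`; every token with a main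
value not in `V_halt` is followed by a later token with a main value starting
exactly `1` time unit later; any token with a value in `V_halt` is the last
token, and the last token's value is in `V_halt ⊆ V_main`. Then the start times
of main-value tokens are exactly `0, 1, …, k−1` for some `k ≥ 1`: consecutive
main-value tokens are at time distance exactly `1`. -/
theorem stmt_13 {Val : Type} (m : ℕ) (s : Fin (m + 1) → ℝ) (v : Fin (m + 1) → Val)
    (Vmain Vhalt : Set Val) (hhm : Vhalt ⊆ Vmain)
    (hmono : StrictMono s)
    (hmain0 : v 0 ∈ Vmain) (hs0 : s 0 = 0)
    (hstep : ∀ i, v i ∈ Vmain → v i ∉ Vhalt →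
      ∃ j, i < j ∧ v j ∈ Vmain ∧ s j = s i + 1)
    (hhaltlast : ∀ i, v i ∈ Vhalt → ∀ j, j ≤ i)
    (hlast : v (Fin.last m) ∈ Vhalt) :
    ∃ k : ℕ, 1 ≤ k ∧
      {t : ℝ | ∃ i, v i ∈ Vmain ∧ s i = t} = {t : ℝ | ∃ n : ℕ, n < k ∧ t = (n : ℝ)} := by
  have hlast_eq : ∀ i, v i ∈ Vhalt → i = Fin.last m := fun i hi =>
    le_antisymm (Fin.le_last i) (hhaltlast i hi (Fin.last m))
  have aux : ∀ n : ℕ, ∀ i : Fin (m + 1), m - i.val ≤ n → v i ∈ Vmain →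
      ∃ r : ℕ, s (Fin.last m) = s i + r := by
    intro n
    induction n with
    | zero =>
      intro i hn _
      have hi : i = Fin.last m := by
        have := i.isLt
        exact Fin.ext (by simp [Fin.last]; omega)
      exact ⟨0, by simp [hi]⟩
    | succ n ih =>
      intro i hn hi
      by_cases h : v i ∈ Vhalt
      · exact ⟨0, by simp [hlast_eq i h]⟩
      · obtain ⟨j, hij, hjm, hsj⟩ := hstep i hi h
        have hlt : i.val < j.val := hij
        obtain ⟨r, hr⟩ := ih j (by omega) hjm
        exact ⟨r + 1, by push_cast; rw [hr, hsj]; ring⟩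
  obtain ⟨N, hN⟩ := aux m 0 (by omega) hmain0
  rw [hs0, zero_add] at hN
  have fwd : ∀ t : ℕ, t ≤ N → ∃ i, v i ∈ Vmain ∧ s i = (t : ℝ) := by
    intro t
    induction t with
    | zero => intro _; exact ⟨0, hmain0, by simp [hs0]⟩
    | succ t ih =>
      intro ht
      obtain ⟨i, hi, hsi⟩ := ih (by omega)
      have hih : v i ∉ Vhalt := by
        intro h
        have := hlast_eq i h
        rw [this, hN] at hsi
        have : t = N := by exact_mod_cast hsi.symm
        omega
      obtain ⟨j, _, hjm, hsj⟩ := hstep i hi hih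
      exact ⟨j, hjm, by rw [hsj, hsi]; push_cast; ring⟩
  refine ⟨N + 1, by omega, ?_⟩
  ext t
  simp only [Set.mem_setOf_eq]
  constructor
  · rintro ⟨i, hi, rfl⟩
    obtain ⟨r, hr⟩ := aux m i (by omega) hi
    have hnn : (0 : ℝ) ≤ s i := by
      rw [← hs0]; exact hmono.monotone (Fin.zero_le i)
    have hrN : r ≤ N := by
      by_contra h
      have : (N : ℝ) < r := by exact_mod_cast not_le.mp h
      rw [hN] at hr; linarith
    refine ⟨N - r, by omega, ?_⟩
    rw [hN] at hr
    push_cast [Nat.cast_sub hrN]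
    linarith
  · rintro ⟨n, hn, rfl⟩
    exact fwd n (by omega)
end

section
/- Given a well-formed, initial, halting computation-code π = u_0 u_1 ... u_{N-1} over V (viewed as a word of length N), there exists a timeline for x_M realizing π: strictly positive durations d_0, ..., d_{N-1} such that each configuration-code block spans exactly one time unit and, for every pair of positions required by the equality/increment/decrement correspondences, the corresponding start-time (resp. end-time) differences equal exactly 1. -/
/-- Start time of position `i`: `s_i = Σ_{h<i} d_h`. -/
def startTime (d : ℕ → ℝ) (i : ℕ) : ℝ := ∑ h ∈ Finset.range i, d h

/-- End time of position `i`: `e_i = Σ_{h≤i} d_h`. -/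
def endTime (d : ℕ → ℝ) (i : ℕ) : ℝ := ∑ h ∈ Finset.range (i + 1), d h

open Classical in
/-- One step of the offset assignment: given offsets `f` of earlier positions,
the offset of position `i`. -/
noncomputable def consVal (N : ℕ) (blk : ℕ → ℕ) (Cons : Set (ℕ × ℕ))
    (f : ℕ → ℝ) (i : ℕ) : ℝ :=
  if h : ∃ p, (p, i) ∈ Cons then f h.choose
  else if ∃ j, j < i ∧ blk j = blk i then
    (f (i - 1) +
      (insert (1 : ℝ) (((Finset.range N).filter
        (fun p => ∃ q, q < N ∧ (p, q) ∈ Cons ∧ blk q = blk i ∧ i < q)).image f)).min'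
        (Finset.insert_nonempty _ _)) / 2
  else 0

noncomputable def tseq (N : ℕ) (blk : ℕ → ℕ) (Cons : Set (ℕ × ℕ)) : ℕ → ℕ → ℝ
  | 0 => fun _ => 0
  | n + 1 => Function.update (tseq N blk Cons n) n
      (consVal N blk Cons (tseq N blk Cons n) n)

noncomputable def ttt (N : ℕ) (blk : ℕ → ℕ) (Cons : Set (ℕ × ℕ)) (i : ℕ) : ℝ :=
  tseq N blk Cons (i + 1) i

lemma tseq_stable (N : ℕ) (blk : ℕ → ℕ) (Cons : Set (ℕ × ℕ)) :
    ∀ n j, j < n → tseq N blk Cons n j = ttt N blk Cons j := by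
  intro n
  induction n with
  | zero => intro j hj; omega
  | succ n IH =>
    intro j hj
    rcases Nat.lt_succ_iff_lt_or_eq.mp hj with h | rfl
    · show Function.update (tseq N blk Cons n) n _ j = _
      rw [Function.update_of_ne (by omega)]
      exact IH j h
    · rfl

lemma ttt_eq (N : ℕ) (blk : ℕ → ℕ) (Cons : Set (ℕ × ℕ)) (i : ℕ) :
    ttt N blk Cons i = consVal N blk Cons (tseq N blk Cons i) i := by
  show Function.update (tseq N blk Cons i) i _ i = _
  rw [Function.update_self]

lemma consVal_cons (N : ℕ) (blk : ℕ → ℕ) (Cons : Set (ℕ × ℕ)) (f : ℕ → ℝ) (i : ℕ)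
    (h : ∃ p, (p, i) ∈ Cons) :
    (h.choose, i) ∈ Cons ∧ consVal N blk Cons f i = f h.choose := by
  refine ⟨h.choose_spec, ?_⟩
  unfold consVal
  rw [dif_pos h]

lemma consVal_last (N : ℕ) (blk : ℕ → ℕ) (Cons : Set (ℕ × ℕ)) (f : ℕ → ℝ) (i : ℕ)
    (h1 : ¬∃ p, (p, i) ∈ Cons) (h2 : ¬∃ j, j < i ∧ blk j = blk i) :
    consVal N blk Cons f i = 0 := by
  unfold consVal
  rw [dif_neg h1, if_neg h2]

open Classical in
lemma consVal_mid (N : ℕ) (blk : ℕ → ℕ) (Cons : Set (ℕ × ℕ)) (f g : ℕ → ℝ) (i : ℕ)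
    (hg : ∀ j, j < i → f j = g j)
    (hlt : ∀ p q, (p, q) ∈ Cons → blk q = blk i → i < q → p < i)
    (h1 : ¬∃ p, (p, i) ∈ Cons) (h2 : ∃ j, j < i ∧ blk j = blk i) :
    ∃ S : Finset ℕ, ∃ hS : (insert (1 : ℝ) (S.image g)).Nonempty,
      (∀ p, p ∈ S ↔ p < N ∧ ∃ q, q < N ∧ (p, q) ∈ Cons ∧ blk q = blk i ∧ i < q) ∧
      consVal N blk Cons f i
        = (g (i - 1) + (insert (1 : ℝ) (S.image g)).min' hS) / 2 := by
  refine ⟨(Finset.range N).filter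
      (fun p => ∃ q, q < N ∧ (p, q) ∈ Cons ∧ blk q = blk i ∧ i < q),
    Finset.insert_nonempty _ _, ?_, ?_⟩
  · intro p
    simp [Finset.mem_filter, Finset.mem_range]
  · unfold consVal
    rw [dif_neg h1, if_pos h2]
    have himg : ((Finset.range N).filter
        (fun p => ∃ q, q < N ∧ (p, q) ∈ Cons ∧ blk q = blk i ∧ i < q)).image f
        = ((Finset.range N).filter
        (fun p => ∃ q, q < N ∧ (p, q) ∈ Cons ∧ blk q = blk i ∧ i < q)).image g := by
      apply Finset.image_congr
      intro p hp
      have hp' := Finset.mem_coe.mp hp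
      rw [Finset.mem_filter] at hp'
      obtain ⟨-, q, hqN, hpq, hbq, hiq⟩ := hp'
      exact hg p (hlt p q hpq hbq hiq)
    have hg1 : f (i - 1) = g (i - 1) := by
      obtain ⟨j, hj, -⟩ := h2
      exact hg _ (by omega)
    rw [hg1]
    congr 1
    simp only [himg]

/-- Abstract realizability of a well-formed computation-code as a timeline.
A word of length `N` is partitioned into `k` contiguous nonempty blocks
(`blk i` is the block of position `i`); `Cons` is a set of start-time
constraint pairs `(p,q)` requiring `s_q = s_p + 1` with `q` in the block
following that of `p`, and `ConsE` a set of end-time constraint pairs requiring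
`e_q = e_p + 1`. Assuming that between any two consecutive blocks the
`Cons`-constrained positions form an order-isomorphism mapping the first
position of a block to the first position of the next one, and that each
end-time constraint is matched by a start-time constraint on the successor
positions (within the same blocks), one can choose strictly positive durations
such that every block spans exactly one time unit and all constrained
start-time (resp. end-time) differences are exactly `1`. -/
theorem stmt_16 (N k : ℕ) (hN : 1 ≤ N) (hk : 1 ≤ k)
    (blk : ℕ → ℕ)
    (hblk0 : blk 0 = 0)
    (hmono : ∀ i, blk i ≤ blk (i + 1))
    (hcontig : ∀ i, i + 1 < N → blk (i + 1) ≤ blk i + 1)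
    (hcover : blk (N - 1) = k - 1)
    (Cons ConsE : Set (ℕ × ℕ))
    (hConsBlk : ∀ p q, (p, q) ∈ Cons → p < N ∧ q < N ∧ blk q = blk p + 1)
    (hIso : ∀ p q p' q', (p, q) ∈ Cons → (p', q') ∈ Cons → blk p = blk p' →
      (p < p' ↔ q < q'))
    (hFirst : ∀ b, b + 1 < k → ∃ p q, (p, q) ∈ Cons ∧ blk p = b ∧
      (∀ p', p' < N → blk p' = b → p ≤ p') ∧
      (∀ q', q' < N → blk q' = b + 1 → q ≤ q'))
    (hConsE : ∀ p q, (p, q) ∈ ConsE → p + 1 < N ∧ q + 1 < N ∧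
      blk (p + 1) = blk p ∧ blk (q + 1) = blk q ∧ (p + 1, q + 1) ∈ Cons) :
    ∃ d : ℕ → ℝ,
      (∀ i, i < N → 0 < d i) ∧
      (∀ b, b < k → ∑ i ∈ (Finset.range N).filter (fun i => blk i = b), d i = 1) ∧
      (∀ p q, (p, q) ∈ Cons → startTime d q = startTime d p + 1) ∧
      (∀ p q, (p, q) ∈ ConsE → endTime d q = endTime d p + 1) := by
  classical
  have mono : Monotone blk := monotone_nat_of_le_succ hmono
  have blt : ∀ {a b : ℕ}, blk a < blk b → a < b := by
    intro a b h
    by_contra hab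
    exact absurd (mono (not_lt.mp hab)) (not_le.mpr h)
  obtain ⟨t, ht⟩ : ∃ t : ℕ → ℝ, t = ttt N blk Cons := ⟨_, rfl⟩
  have ttEq : ∀ i, t i = consVal N blk Cons (tseq N blk Cons i) i := by
    rw [ht]; exact ttt_eq N blk Cons
  have hstable : ∀ i j, j < i → tseq N blk Cons i j = t j := by
    rw [ht]; exact tseq_stable N blk Cons
  have hfun : ∀ p p' q, (p, q) ∈ Cons → (p', q) ∈ Cons → p = p' := by
    intro p p' q h h'
    have hb1 := (hConsBlk p q h).2.2
    have hb2 := (hConsBlk p' q h').2.2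
    have hb : blk p = blk p' := by omega
    have h1 := hIso p q p' q h h' hb
    have h2 := hIso p' q p q h' h hb.symm
    omega
  have tCons : ∀ p q, (p, q) ∈ Cons → t q = t p := by
    intro p q hpq
    have hex : ∃ p, (p, q) ∈ Cons := ⟨p, hpq⟩
    obtain ⟨hc, heq⟩ := consVal_cons N blk Cons (tseq N blk Cons q) q hex
    have hlt : hex.choose < q := blt (by have := (hConsBlk _ _ hc).2.2; omega)
    calc t q = consVal N blk Cons (tseq N blk Cons q) q := ttEq q
      _ = tseq N blk Cons q hex.choose := heq
      _ = t hex.choose := hstable q _ hlt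
      _ = t p := by rw [hfun _ _ _ hc hpq]
  -- master invariant
  have main : ∀ i, i < N →
      (0 ≤ t i ∧ t i < 1) ∧
      (∀ j, j < i → blk j = blk i → t j < t i) ∧
      (∀ p q, (p, q) ∈ Cons → blk q = blk i → i < q → t i < t p) ∧
      ((∀ j, j < i → blk j ≠ blk i) → t i = 0) := by
    intro i
    induction i using Nat.strong_induction_on with
    | _ i IH =>
    intro hiN
    have hbik : blk i < k := by
      have h1 : blk i ≤ blk (N - 1) := mono (by omega)
      omega
    by_cases hcons : ∃ p, (p, i) ∈ Cons
    · obtain ⟨p, hp⟩ := hcons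
      have hti : t i = t p := tCons p i hp
      obtain ⟨hpN, hiN', hpb⟩ := hConsBlk p i hp
      have hpi : p < i := blt (by omega)
      obtain ⟨⟨hp0, hp1⟩, hpC, hpE, -⟩ := IH p hpi hpN
      refine ⟨⟨by rw [hti]; exact hp0, by rw [hti]; exact hp1⟩, ?_, ?_, ?_⟩
      · intro j hj hbj
        have hjN : j < N := lt_trans hj hiN
        obtain ⟨-, -, hjE, -⟩ := IH j hj hjN
        rw [hti]
        exact hjE p i hp hbj.symm hj
      · intro p' q' hp'q' hbq' hiq'
        obtain ⟨hp'N, hq'N, hp'b⟩ := hConsBlk p' q' hp'q'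
        have hbb : blk p = blk p' := by omega
        have hpp' : p < p' := (hIso p i p' q' hp hp'q' hbb).mpr hiq'
        have hp'i : p' < i := blt (by omega)
        obtain ⟨-, hC', -, -⟩ := IH p' hp'i hp'N
        rw [hti]
        exact hC' p hpp' hbb
      · intro hfirst
        obtain ⟨p0, q0, hp0q0, hbp0, hminp, hminq⟩ := hFirst (blk p) (by omega)
        obtain ⟨hp0N, hq0N, hbq0⟩ := hConsBlk p0 q0 hp0q0
        have hq0le : q0 ≤ i := hminq i hiN (by omega)
        have hq0i : q0 = i := by
          rcases Nat.lt_or_ge q0 i with h | h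
          · exact absurd (by omega : blk q0 = blk i) (hfirst q0 h)
          · omega
        have hpp0 : p0 = p := hfun p0 p i (hq0i ▸ hp0q0) hp
        have hp0first : ∀ j, j < p0 → blk j ≠ blk p0 := by
          intro j hj hbj
          have := hminp j (by omega) (by omega)
          omega
        obtain ⟨-, -, -, hA0⟩ := IH p0 (by omega) hp0N
        rw [hti, ← hpp0]
        exact hA0 hp0first
    · by_cases hprev : ∃ j, j < i ∧ blk j = blk i
      · -- middle of a block, unconstrained
        obtain ⟨j0, hj0, hbj0⟩ := hprev
        have hi1 : i - 1 < i := by omega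
        have hi1N : i - 1 < N := by omega
        have hbi1 : blk (i - 1) = blk i := by
          have h1 : blk j0 ≤ blk (i - 1) := mono (by omega)
          have h2 : blk (i - 1) ≤ blk i := mono (by omega)
          omega
        obtain ⟨⟨h10, h11⟩, h1C, h1E, -⟩ := IH (i - 1) hi1 hi1N
        obtain ⟨S, hS, hmemS, hti⟩ := consVal_mid N blk Cons (tseq N blk Cons i) t i
          (fun j hj => hstable i j hj)
          (fun p q hpq hbq hiq => blt (by have := (hConsBlk p q hpq).2.2; omega))
          hcons ⟨j0, hj0, hbj0⟩
        have hti' : t i = (t (i - 1) + (insert (1 : ℝ) (S.image t)).min' hS) / 2 :=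
          (ttEq i).trans hti
        have hlM : t (i - 1) < (insert (1 : ℝ) (S.image t)).min' hS := by
          rw [Finset.lt_min'_iff]
          intro y hy
          rcases Finset.mem_insert.mp hy with rfl | hy
          · exact h11
          · obtain ⟨p, hpS, rfl⟩ := Finset.mem_image.mp hy
            obtain ⟨hpN, q, hqN, hpq, hbq, hiq⟩ := (hmemS p).mp hpS
            exact h1E p q hpq (by omega) (by omega)
        have hM1 : (insert (1 : ℝ) (S.image t)).min' hS ≤ 1 :=
          Finset.min'_le _ _ (Finset.mem_insert_self _ _)
        have hlow : t (i - 1) < t i := by rw [hti']; linarith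
        have hhigh : t i < (insert (1 : ℝ) (S.image t)).min' hS := by rw [hti']; linarith
        refine ⟨⟨by linarith, by linarith⟩, ?_, ?_, ?_⟩
        · intro j hj hbj
          rcases Nat.lt_or_ge j (i - 1) with h | h
          · have := h1C j h (by omega)
            linarith
          · have : j = i - 1 := by omega
            rw [this]; exact hlow
        · intro p' q' hp'q' hbq' hiq'
          obtain ⟨hp'N, hq'N, hb'⟩ := hConsBlk p' q' hp'q'
          have hmem : t p' ∈ insert (1 : ℝ) (S.image t) :=
            Finset.mem_insert_of_mem (Finset.mem_image_of_mem t
              ((hmemS p').mpr ⟨hp'N, q', hq'N, hp'q', hbq', hiq'⟩))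
          have := Finset.min'_le _ _ hmem
          linarith
        · intro hfirst
          exact absurd hbj0 (hfirst j0 hj0)
      · -- first of a block, unconstrained
        have hti : t i = 0 := (ttEq i).trans
          (consVal_last N blk Cons (tseq N blk Cons i) i hcons hprev)
        refine ⟨⟨by rw [hti], by rw [hti]; norm_num⟩, ?_, ?_, fun _ => hti⟩
        · intro j hj hbj
          exact absurd ⟨j, hj, hbj⟩ hprev
        · intro p' q' hp'q' hbq' hiq'
          obtain ⟨hp'N, hq'N, hb'⟩ := hConsBlk p' q' hp'q'
          obtain ⟨p0, q0, hp0q0, hbp0, hminp, hminq⟩ := hFirst (blk p') (by omega)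
          obtain ⟨hp0N, hq0N, hbq0⟩ := hConsBlk p0 q0 hp0q0
          have hq0le : q0 ≤ i := hminq i hiN (by omega)
          have hq0i : q0 = i := by
            rcases Nat.lt_or_ge q0 i with h | h
            · exact absurd ⟨q0, h, by omega⟩ hprev
            · omega
          exact absurd ⟨p0, hq0i ▸ hp0q0⟩ hcons
  -- intermediate value property for blk
  have ivt : ∀ m, m < N → ∀ c, c ≤ blk m → ∃ j, j ≤ m ∧ blk j = c := by
    intro m
    induction m with
    | zero => intro _ c hc; exact ⟨0, le_refl 0, by omega⟩
    | succ m IHm =>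
      intro hm c hc
      by_cases h : c ≤ blk m
      · obtain ⟨j, hj, hbj⟩ := IHm (by omega) c h
        exact ⟨j, by omega, hbj⟩
      · have h1 := hcontig m hm
        have h2 := hmono m
        exact ⟨m + 1, le_refl _, by omega⟩
  -- global start times
  obtain ⟨s, hsdef⟩ : ∃ s : ℕ → ℝ,
      s = fun i => if i < N then (blk i : ℝ) + t i else (k : ℝ) := ⟨_, rfl⟩
  have hsval : ∀ i, i < N → s i = blk i + t i := by
    intro i h; rw [hsdef]; simp [h]
  have hsge : ∀ i, ¬ i < N → s i = k := by
    intro i h; rw [hsdef]; simp [h]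
  have ht0 : t 0 = 0 := (main 0 (by omega)).2.2.2 (by intro j hj; omega)
  have hs0 : s 0 = 0 := by
    rw [hsval 0 (by omega), hblk0, ht0]
    norm_num
  have hstart : ∀ i, startTime (fun i => s (i + 1) - s i) i = s i := by
    intro i
    show ∑ h ∈ Finset.range i, (s (h + 1) - s h) = s i
    rw [Finset.sum_range_sub s, hs0, sub_zero]
  refine ⟨fun i => s (i + 1) - s i, ?_, ?_, ?_, ?_⟩
  · -- positivity
    intro i hi
    show 0 < s (i + 1) - s i
    rcases Nat.lt_or_ge (i + 1) N with h1 | h1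
    · have hsub := hcontig i h1
      have hm := hmono i
      rw [hsval (i + 1) h1, hsval i hi]
      rcases (by omega : blk (i + 1) = blk i ∨ blk (i + 1) = blk i + 1) with he | he
      · have hC := (main (i + 1) h1).2.1 i (by omega) he.symm
        rw [he]
        linarith
      · have h0 := (main (i + 1) h1).1.1
        have h2 := (main i hi).1.2
        rw [he]
        push_cast
        linarith
    · have hieq : i = N - 1 := by omega
      rw [hsge (i + 1) (by omega), hsval i hi]
      have hb : blk i = k - 1 := by rw [hieq]; exact hcover
      have h2 := (main i hi).1.2
      rw [hb]
      have hcast : ((k - 1 : ℕ) : ℝ) = (k : ℝ) - 1 := by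
        push_cast [hk]; ring
      rw [hcast]
      linarith
  · -- block sums
    intro b hb
    have hex : ∃ i, i < N ∧ blk i = b := by
      obtain ⟨j, hj, hbj⟩ := ivt (N - 1) (by omega) b (by rw [hcover]; omega)
      exact ⟨j, by omega, hbj⟩
    have hlN : Nat.find hex < N := (Nat.find_spec hex).1
    have hbl : blk (Nat.find hex) = b := (Nat.find_spec hex).2
    have htl : t (Nat.find hex) = 0 := by
      apply (main _ hlN).2.2.2
      intro j hj hbj
      exact Nat.find_min hex hj ⟨by omega, by omega⟩
    by_cases hlast : b = k - 1
    · have hfe : (Finset.range N).filter (fun i => blk i = b)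
          = Finset.Ico (Nat.find hex) N := by
        ext i
        simp only [Finset.mem_filter, Finset.mem_range, Finset.mem_Ico]
        constructor
        · rintro ⟨hiN, hbi⟩
          exact ⟨Nat.find_min' hex ⟨hiN, hbi⟩, hiN⟩
        · rintro ⟨h1, h2⟩
          refine ⟨h2, ?_⟩
          have hm1 : blk (Nat.find hex) ≤ blk i := mono h1
          have hm2 : blk i ≤ blk (N - 1) := mono (by omega)
          omega
      rw [hfe, Finset.sum_Ico_eq_sub _ (le_of_lt hlN),
        Finset.sum_range_sub s, Finset.sum_range_sub s,
        hs0, hsge N (lt_irrefl N), hsval _ hlN, hbl, htl, hlast]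
      have hcast : ((k - 1 : ℕ) : ℝ) = (k : ℝ) - 1 := by
        push_cast [hk]; ring
      rw [hcast]
      ring
    · have hex2 : ∃ i, i < N ∧ blk i = b + 1 := by
        obtain ⟨j, hj, hbj⟩ := ivt (N - 1) (by omega) (b + 1) (by rw [hcover]; omega)
        exact ⟨j, by omega, hbj⟩
      have hl2N : Nat.find hex2 < N := (Nat.find_spec hex2).1
      have hbl2 : blk (Nat.find hex2) = b + 1 := (Nat.find_spec hex2).2
      have htl2 : t (Nat.find hex2) = 0 := by
        apply (main _ hl2N).2.2.2
        intro j hj hbj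
        exact Nat.find_min hex2 hj ⟨by omega, by omega⟩
      have hll2 : Nat.find hex < Nat.find hex2 := blt (by omega)
      have hfe : (Finset.range N).filter (fun i => blk i = b)
          = Finset.Ico (Nat.find hex) (Nat.find hex2) := by
        ext i
        simp only [Finset.mem_filter, Finset.mem_range, Finset.mem_Ico]
        constructor
        · rintro ⟨hiN, hbi⟩
          refine ⟨Nat.find_min' hex ⟨hiN, hbi⟩, ?_⟩
          by_contra hcon
          have : blk (Nat.find hex2) ≤ blk i := mono (by omega)
          omega
        · rintro ⟨h1, h2⟩
          have hiN : i < N := by omega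
          refine ⟨hiN, ?_⟩
          have hm1 : blk (Nat.find hex) ≤ blk i := mono h1
          by_contra hcon
          obtain ⟨j, hj, hbj⟩ := ivt i hiN (b + 1) (by omega)
          have := Nat.find_min' hex2 (⟨by omega, hbj⟩ : j < N ∧ blk j = b + 1)
          omega
      rw [hfe, Finset.sum_Ico_eq_sub _ (le_of_lt hll2),
        Finset.sum_range_sub s, Finset.sum_range_sub s,
        hs0, hsval _ hl2N, hsval _ hlN, hbl, hbl2, htl, htl2]
      push_cast
      ring
  · -- Cons constraints
    intro p q hpq
    obtain ⟨hpN, hqN, hbq⟩ := hConsBlk p q hpq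
    rw [hstart, hstart, hsval q hqN, hsval p hpN, hbq, tCons p q hpq]
    push_cast
    ring
  · -- ConsE constraints
    intro p q hpq
    obtain ⟨hpN, hqN, hb1, hb2, hC⟩ := hConsE p q hpq
    obtain ⟨-, -, hbq⟩ := hConsBlk _ _ hC
    show startTime (fun i => s (i + 1) - s i) (q + 1)
      = startTime (fun i => s (i + 1) - s i) (p + 1) + 1
    rw [hstart, hstart, hsval _ hqN, hsval _ hpN, hbq, tCons _ _ hC]
    push_cast
    ring
end
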